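/- arXiv:2010.04108 — 4 statements merged into one kernel-verified Lean document; each statement's English description precedes it below -/
import Mathlib

section
/- If the ordered permutation graph G_π is bipartite, then every vertex is a type-A vertex or a type-B vertex. -/
/-! A vertex `v` that is neither of type A nor of type B has a smaller vertex `a` placed after it
by `π` and a larger vertex `b` placed before it. Then `a < v < b` while `π⁻¹ b < π⁻¹ v < π⁻¹ a`,
so `a, v, b` span a triangle in `G_π`, which cannot be 2-coloured. -/

def permGraph {n : ℕ} (π : Equiv.Perm (Fin n)) : SimpleGraph (Fin n) :=
  SimpleGraph.fromRel (fun u v => u < v ∧ π.symm v < π.symm u)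

def typeA {n : ℕ} (π : Equiv.Perm (Fin n)) (v : Fin n) : Prop :=
  ∀ u, u ≤ v → π.symm u ≤ π.symm v

def typeB {n : ℕ} (π : Equiv.Perm (Fin n)) (v : Fin n) : Prop :=
  ∀ u, v ≤ u → π.symm v ≤ π.symm u

theorem SimpleGraph.not_colorable_two_of_adj_of_adj_of_adj {V : Type*} {G : SimpleGraph V}
    {a b c : V} (hab : G.Adj a b) (hbc : G.Adj b c) (hac : G.Adj a c) : ¬ G.Colorable 2 := by
  rintro ⟨C⟩
  have := C.valid hab
  have := C.valid hbc
  have := C.valid hac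
  omega

section

variable {n : ℕ} (π : Equiv.Perm (Fin n))

theorem permGraph_adj_of_lt {u v : Fin n} (huv : u < v) (hπ : π.symm v < π.symm u) :
    (permGraph π).Adj u v :=
  (SimpleGraph.fromRel_adj _ _ _).2 ⟨huv.ne, Or.inl ⟨huv, hπ⟩⟩

variable {π}

theorem exists_lt_of_not_typeA {v : Fin n} (h : ¬ typeA π v) :
    ∃ u < v, π.symm v < π.symm u := by
  simp only [typeA, not_forall, not_le, exists_prop] at h
  obtain ⟨u, huv, hπ⟩ := h
  exact ⟨u, huv.lt_of_ne (by rintro rfl; exact hπ.false), hπ⟩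

theorem exists_gt_of_not_typeB {v : Fin n} (h : ¬ typeB π v) :
    ∃ u > v, π.symm u < π.symm v := by
  simp only [typeB, not_forall, not_le, exists_prop] at h
  obtain ⟨u, hvu, hπ⟩ := h
  exact ⟨u, hvu.lt_of_ne (by rintro rfl; exact hπ.false), hπ⟩

end

theorem stmt_13 {n : ℕ} (π : Equiv.Perm (Fin n))
    (hbip : (permGraph π).Colorable 2) :
    ∀ v, typeA π v ∨ typeB π v := by
  intro v
  by_contra! h
  obtain ⟨hA, hB⟩ := h
  obtain ⟨a, hav, hπa⟩ := exists_lt_of_not_typeA hA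
  obtain ⟨b, hvb, hπb⟩ := exists_gt_of_not_typeB hB
  exact SimpleGraph.not_colorable_two_of_adj_of_adj_of_adj
    (permGraph_adj_of_lt π hav hπa) (permGraph_adj_of_lt π hvb hπb)
    (permGraph_adj_of_lt π (hav.trans hvb) (hπb.trans hπa)) hbip
end

section
/- In a bipartite ordered permutation graph G_π, for a type-B vertex v, the neighborhood of v equals the set of type-A vertices a with a⁻(v) ≤ a ≤ a⁺(v), where a⁻(v) and a⁺(v) denote the minimum and maximum type-A neighbor of v; i.e., the neighborhood of v is a contiguous interval within the type-A vertices. -/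
/-!
The neighbours of a type-B vertex `v` are exactly the `u < v` with `π⁻¹ v < π⁻¹ u`. Such a `u`
is type A, for a witness `w < u` with `π⁻¹ u < π⁻¹ w` would close a triangle `w u v`, which a
bipartite graph cannot contain. Conversely a type-A `u` with `a⁻ ≤ u ≤ a⁺` satisfies
`u ≤ a⁺ < v` and `π⁻¹ v < π⁻¹ a⁻ ≤ π⁻¹ u`.
-/

namespace permGraph

variable {n : ℕ} {π : Equiv.Perm (Fin n)}

lemma adj_iff {u w : Fin n} :
    (permGraph π).Adj u w ↔
      (u < w ∧ π.symm w < π.symm u) ∨ (w < u ∧ π.symm u < π.symm w) := by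
  rw [permGraph, SimpleGraph.fromRel_adj, and_iff_right_iff_imp]
  rintro (h | h) rfl <;> exact h.1.false

lemma adj_of_lt {u w : Fin n} (huw : u < w) (hπ : π.symm w < π.symm u) :
    (permGraph π).Adj u w :=
  adj_iff.2 (Or.inl ⟨huw, hπ⟩)

lemma typeA_of_lt_of_symm_lt (hG : (permGraph π).CliqueFree 3) {u v : Fin n}
    (huv : u < v) (hπ : π.symm v < π.symm u) : typeA π u := by
  intro w hwu
  by_contra! hπw
  have hwu : w < u := lt_of_le_of_ne hwu (by rintro rfl; exact hπw.false)
  exact hG {w, u, v} <| SimpleGraph.is3Clique_triple_iff.2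
    ⟨adj_of_lt hwu hπw, adj_of_lt (hwu.trans huv) (hπ.trans hπw), adj_of_lt huv hπ⟩

end permGraph

lemma typeB.permGraph_adj_iff {n : ℕ} {π : Equiv.Perm (Fin n)} {v : Fin n}
    (hv : typeB π v) {u : Fin n} :
    (permGraph π).Adj v u ↔ u < v ∧ π.symm v < π.symm u := by
  refine ⟨fun h => ?_, fun h => permGraph.adj_iff.2 (Or.inr h)⟩
  rcases permGraph.adj_iff.1 h with h | h
  · exact absurd (hv u h.1.le) h.2.not_ge
  · exact h

theorem stmt_16 {n : ℕ} (π : Equiv.Perm (Fin n))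
    (hbip : (permGraph π).Colorable 2)
    (v : Fin n) (hv : typeB π v)
    (aminus aplus : Fin n)
    (hmin : typeA π aminus ∧ (permGraph π).Adj v aminus ∧
      ∀ a, typeA π a → (permGraph π).Adj v a → aminus ≤ a)
    (hmax : typeA π aplus ∧ (permGraph π).Adj v aplus ∧
      ∀ a, typeA π a → (permGraph π).Adj v a → a ≤ aplus) :
    ∀ u, (permGraph π).Adj v u ↔ (typeA π u ∧ aminus ≤ u ∧ u ≤ aplus) := by
  obtain ⟨-, hvmin, hmin_le⟩ := hmin
  obtain ⟨-, hvmax, hle_max⟩ := hmax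
  intro u
  constructor
  · intro hvu
    obtain ⟨huv, hπ⟩ := hv.permGraph_adj_iff.1 hvu
    have hu : typeA π u :=
      permGraph.typeA_of_lt_of_symm_lt (hbip.cliqueFree (by norm_num)) huv hπ
    exact ⟨hu, hmin_le u hu hvu, hle_max u hu hvu⟩
  · rintro ⟨hu, hmin_u, hu_max⟩
    have hmax_v : aplus < v := (hv.permGraph_adj_iff.1 hvmax).1
    have hπmin : π.symm v < π.symm aminus := (hv.permGraph_adj_iff.1 hvmin).2
    exact hv.permGraph_adj_iff.2 ⟨hu_max.trans_lt hmax_v, hπmin.trans_le (hu aminus hmin_u)⟩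
end

section
/- For any vertices u < v in G_π with u and v not adjacent, if u and v are in the same connected component, then some shortest path from u to v passes through a⁺(u) or through b⁺(u); more precisely, dist(u,v) = 1 + min(dist(a⁺(u), v), dist(b⁺(u), v)), where a⁺(u) (resp. b⁺(u)) is the maximum type-A (resp. type-B) neighbor of u. -/
/-! Since `ap` and `bp` are neighbours of `u`, only `1 + min (dist ap v) (dist bp v) ≤ dist u v`
needs an argument. The vertex `v` lies in the quadrant of vertices larger than `u` that come after
`u` in `π`. Walking back from `v` along a shortest path one stays in this quadrant until reaching a
vertex `x` two steps away from `u`, through some neighbour `w` of `u`. If `w < u`, then `w` comes no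
later than `ap` (maximality of `ap`), so `x` is adjacent to `ap`; if `u < w`, then `w ≤ bp`
(maximality of `bp`), so `x` is adjacent to `bp`. -/

namespace SimpleGraph

variable {V : Type*} {G : SimpleGraph V}

lemma dist_le_dist_add_one_of_adj {a x y : V} (h : G.Adj y x) :
    G.dist a x ≤ G.dist a y + 1 := by
  simpa [dist_eq_one_iff_adj.mpr h] using h.reachable.dist_triangle_right a

lemma Reachable.exists_adj_dist_add_one_eq {u x : V} (hr : G.Reachable u x) (hne : u ≠ x) :
    ∃ y, G.Adj y x ∧ G.dist u y + 1 = G.dist u x := by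
  obtain ⟨p, hp⟩ := hr.exists_walk_length_eq_dist
  have hnil : ¬ p.Nil := fun h => hne h.eq
  refine ⟨p.penultimate, p.adj_penultimate hnil,
    le_antisymm ?_ (dist_le_dist_add_one_of_adj (p.adj_penultimate hnil))⟩
  have := dist_le p.dropLast
  have := p.length_dropLast_add_one hnil
  omega

theorem min_dist_add_one_le_dist_of_cover {u a b : V} (Q : Set V) (hu : u ∉ Q)
    (hQ : ∀ x ∈ Q, ¬ G.Adj u x)
    (hQ_adj : ∀ x ∈ Q, ∀ y, G.Adj y x → y ≠ u → ¬ G.Adj u y → y ∈ Q)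
    (hcover : ∀ w x, G.Adj u w → G.Adj w x → x ∈ Q → G.Adj a x ∨ G.Adj b x)
    {x : V} (hx : x ∈ Q) (hr : G.Reachable u x) :
    min (G.dist a x) (G.dist b x) + 1 ≤ G.dist u x := by
  induction hd : G.dist u x using Nat.strong_induction_on generalizing x with
  | _ d ih =>
  obtain ⟨y, hyx, hy⟩ := hr.exists_adj_dist_add_one_eq (ne_of_mem_of_not_mem hx hu).symm
  have hyu : y ≠ u := by rintro rfl; exact hQ x hx hyx
  by_cases huy : G.Adj u y
  · have := dist_eq_one_iff_adj.mpr huy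
    rcases hcover y x huy hyx hx with h | h <;>
    · have := dist_eq_one_iff_adj.mpr h
      omega
  · have := ih _ (by omega) (hQ_adj x hx y hyx hyu huy) (hr.trans hyx.symm.reachable) rfl
    have := dist_le_dist_add_one_of_adj (a := a) hyx
    have := dist_le_dist_add_one_of_adj (a := b) hyx
    omega

end SimpleGraph

open SimpleGraph

section PermGraph

variable {n : ℕ} {π : Equiv.Perm (Fin n)}

lemma permGraph_adj {x y : Fin n} :
    (permGraph π).Adj x y ↔
      (x < y ∧ π.symm y < π.symm x) ∨ (y < x ∧ π.symm x < π.symm y) := by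
  rw [permGraph, fromRel_adj, and_iff_right_iff_imp]
  rintro (⟨h, -⟩ | ⟨h, -⟩)
  exacts [h.ne, h.ne']

lemma permGraph_not_adj_of_lt {x y : Fin n} (h : x < y) (hπ : π.symm x < π.symm y) :
    ¬ (permGraph π).Adj x y := by
  rw [permGraph_adj]
  rintro (⟨-, h'⟩ | ⟨h', -⟩)
  exacts [hπ.not_gt h', h.not_gt h']

lemma lt_iff_symm_lt_of_not_adj {x y : Fin n} (h : ¬ (permGraph π).Adj x y) :
    x < y ↔ π.symm x < π.symm y := by
  constructor <;> intro hlt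
  · refine (lt_or_gt_of_ne (π.symm.injective.ne hlt.ne)).resolve_right fun h' => ?_
    exact h (permGraph_adj.mpr (.inl ⟨hlt, h'⟩))
  · refine (lt_or_gt_of_ne fun e => hlt.ne (congrArg π.symm e)).resolve_right fun h' => ?_
    exact h (permGraph_adj.mpr (.inr ⟨h', hlt⟩))

def upperQuadrant (π : Equiv.Perm (Fin n)) (u : Fin n) : Set (Fin n) :=
  {x | u < x ∧ π.symm u < π.symm x}

lemma not_adj_of_mem_upperQuadrant {u x : Fin n} (hx : x ∈ upperQuadrant π u) :
    ¬ (permGraph π).Adj u x :=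
  permGraph_not_adj_of_lt hx.1 hx.2

lemma mem_upperQuadrant_of_adj {u x y : Fin n} (hx : x ∈ upperQuadrant π u)
    (hyx : (permGraph π).Adj y x) (hyu : y ≠ u) (huy : ¬ (permGraph π).Adj u y) :
    y ∈ upperQuadrant π u := by
  rcases lt_or_gt_of_ne hyu with hyu | huy'
  · have hπ := (lt_iff_symm_lt_of_not_adj fun h => huy h.symm).mp hyu
    exact absurd hyx (permGraph_not_adj_of_lt (hyu.trans hx.1) (hπ.trans hx.2))
  · exact ⟨huy', (lt_iff_symm_lt_of_not_adj huy).mp huy'⟩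

lemma typeA.lt_of_adj {u a : Fin n} (ha : typeA π a) (h : (permGraph π).Adj u a) :
    a < u ∧ π.symm u < π.symm a := by
  rcases permGraph_adj.mp h with ⟨hua, hπ⟩ | h'
  · exact absurd (ha u hua.le) hπ.not_ge
  · exact h'

lemma typeB.lt_of_adj {u b : Fin n} (hb : typeB π b) (h : (permGraph π).Adj u b) :
    u < b ∧ π.symm b < π.symm u := by
  rcases permGraph_adj.mp h with h' | ⟨hbu, hπ⟩
  · exact h'
  · exact absurd (hb u hbu.le) hπ.not_ge

lemma symm_le_of_isGreatest_typeA {u ap : Fin n}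
    (hap : IsGreatest {a | typeA π a ∧ (permGraph π).Adj u a} ap) {t : Fin n} (ht : t ≤ u) :
    π.symm t ≤ π.symm ap := by
  obtain ⟨a, ha, hmax⟩ := Finset.exists_max_image (Finset.univ.filter (· ≤ u)) π.symm ⟨u, by simp⟩
  simp only [Finset.mem_filter, Finset.mem_univ, true_and] at ha hmax
  have hA : typeA π a := fun s hs => hmax s (hs.trans ha)
  have hapu := hap.1.1.lt_of_adj hap.1.2
  have hπua : π.symm u < π.symm a := hapu.2.trans_le (hmax ap hapu.1.le)
  have hau : a < u := ha.lt_of_ne (by rintro rfl; exact hπua.false)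
  exact (hmax t ht).trans (hap.1.1 a (hap.2 ⟨hA, permGraph_adj.mpr (.inr ⟨hau, hπua⟩)⟩))

lemma le_of_isGreatest_typeB {u bp : Fin n}
    (hbp : IsGreatest {b | typeB π b ∧ (permGraph π).Adj u b} bp) {t : Fin n} (ht : u < t)
    (hπt : π.symm t < π.symm u) : t ≤ bp := by
  obtain ⟨c, hc, hmin⟩ := Finset.exists_min_image (Finset.univ.filter (t ≤ ·)) π.symm ⟨t, by simp⟩
  simp only [Finset.mem_filter, Finset.mem_univ, true_and] at hc hmin
  have hB : typeB π c := fun s hs => hmin s (hc.trans hs)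
  have huc : (permGraph π).Adj u c :=
    permGraph_adj.mpr (.inl ⟨ht.trans_le hc, (hmin t le_rfl).trans_lt hπt⟩)
  exact hc.trans (hbp.2 ⟨hB, huc⟩)

lemma adj_or_adj_of_mem_upperQuadrant {u ap bp w x : Fin n}
    (hap : IsGreatest {a | typeA π a ∧ (permGraph π).Adj u a} ap)
    (hbp : IsGreatest {b | typeB π b ∧ (permGraph π).Adj u b} bp)
    (huw : (permGraph π).Adj u w) (hwx : (permGraph π).Adj w x)
    (hx : x ∈ upperQuadrant π u) :
    (permGraph π).Adj ap x ∨ (permGraph π).Adj bp x := by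
  rcases permGraph_adj.mp huw with ⟨huw, hπwu⟩ | ⟨hwu, hπuw⟩
  · have hxw : x < w := by
      rcases permGraph_adj.mp hwx with ⟨-, hπ⟩ | ⟨h, -⟩
      · exact absurd ((hπ.trans hπwu).trans hx.2) (lt_irrefl _)
      · exact h
    exact .inr <| permGraph_adj.mpr <| .inr
      ⟨hxw.trans_le (le_of_isGreatest_typeB hbp huw hπwu),
        (hbp.1.1.lt_of_adj hbp.1.2).2.trans hx.2⟩
  · have hπxw : π.symm x < π.symm w := by
      rcases permGraph_adj.mp hwx with ⟨-, hπ⟩ | ⟨h, -⟩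
      · exact hπ
      · exact absurd ((h.trans hwu).trans hx.1) (lt_irrefl _)
    exact .inl <| permGraph_adj.mpr <| .inl
      ⟨(hap.1.1.lt_of_adj hap.1.2).1.trans hx.1,
        hπxw.trans_le (symm_le_of_isGreatest_typeA hap hwu.le)⟩

end PermGraph

theorem stmt_17 {n : ℕ} (π : Equiv.Perm (Fin n)) (u v : Fin n)
    (huv : u < v) (hna : ¬ (permGraph π).Adj u v)
    (hr : (permGraph π).Reachable u v)
    (ap bp : Fin n)
    (hap : typeA π ap ∧ (permGraph π).Adj u ap ∧
      ∀ a, typeA π a → (permGraph π).Adj u a → a ≤ ap)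
    (hbp : typeB π bp ∧ (permGraph π).Adj u bp ∧
      ∀ b, typeB π b → (permGraph π).Adj u b → b ≤ bp) :
    (permGraph π).dist u v =
      1 + min ((permGraph π).dist ap v) ((permGraph π).dist bp v) := by
  have hA : IsGreatest {a | typeA π a ∧ (permGraph π).Adj u a} ap :=
    ⟨⟨hap.1, hap.2.1⟩, fun a ha => hap.2.2 a ha.1 ha.2⟩
  have hB : IsGreatest {b | typeB π b ∧ (permGraph π).Adj u b} bp :=
    ⟨⟨hbp.1, hbp.2.1⟩, fun b hb => hbp.2.2 b hb.1 hb.2⟩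
  have hv : v ∈ upperQuadrant π u := ⟨huv, (lt_iff_symm_lt_of_not_adj hna).mp huv⟩
  have hlower := min_dist_add_one_le_dist_of_cover (upperQuadrant π u) (fun h => h.1.false)
    (fun _ => not_adj_of_mem_upperQuadrant) (fun _ hx _ => mem_upperQuadrant_of_adj hx)
    (fun _ _ => adj_or_adj_of_mem_upperQuadrant hA hB) hv hr
  have hupper_a : (permGraph π).dist u v ≤ (permGraph π).dist ap v + 1 := by
    simpa only [dist_comm (u := v)] using dist_le_dist_add_one_of_adj (a := v) hap.2.1.symm
  have hupper_b : (permGraph π).dist u v ≤ (permGraph π).dist bp v + 1 := by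
    simpa only [dist_comm (u := v)] using dist_le_dist_add_one_of_adj (a := v) hbp.2.1.symm
  omega
end

section
/- Every caterpillar tree is a permutation graph, i.e., for every caterpillar T on n vertices there exists a permutation π of [n] and a graph isomorphism from T to G_π. -/
def IsCaterpillar {V : Type*} [Fintype V] (T : SimpleGraph V) [DecidableRel T.Adj] : Prop :=
  T.IsTree ∧
  ∃ (k : ℕ) (f : Fin k ≃ {v : V // 2 ≤ T.degree v}),
    ∀ i j : Fin k,
      (T.induce {v : V | 2 ≤ T.degree v}).Adj
          ⟨(f i).1, (f i).2⟩ ⟨(f j).1, (f j).2⟩ ↔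
        (i.val + 1 = j.val ∨ j.val + 1 = i.val)

/-!
Draw a permutation graph as segments joining two parallel lines: vertex `v` joins the point
`x v` on the upper line to `y v` on the lower one, and two vertices are adjacent iff their
segments cross. For a caterpillar, let the `i`-th spine vertex run between `4i` and `4i + 6`,
from left to right for even `i` and from right to left for odd `i`: consecutive spine segments
cross, while spine segments two or more steps apart lie in disjoint strips. Each leaf hanging
from spine vertex `i` is the vertical segment at `4i + 3`, which crosses only that spine
segment. Leaves at the same abscissa are separated by a common lexicographic tiebreak.
-/

open Function SimpleGraph

section Caterpillar

variable {V : Type*}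

section CrossingGraph

variable {α : Type*} [LinearOrder α]

def crossingGraph (x y : V → α) : SimpleGraph V :=
  fromRel fun u v => x u < x v ∧ y v < y u

theorem Fintype.exists_equivFin_lt_iff_lt [Fintype V] {x : V → α} (hx : Injective x) :
    ∃ φ : V ≃ Fin (Fintype.card V), ∀ u v, φ u < φ v ↔ x u < x v := by
  let _ : LinearOrder V := LinearOrder.lift' x hx
  exact ⟨(Fintype.orderIsoFinOfCardEq V rfl).symm.toEquiv, fun u v =>
    (Fintype.orderIsoFinOfCardEq V rfl).symm.lt_iff_lt⟩

theorem exists_iso_permGraph_of_eq_crossingGraph [Fintype V] {T : SimpleGraph V}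
    {x y : V → α} (hx : Injective x) (hy : Injective y) (hT : T = crossingGraph x y) :
    ∃ (π : Equiv.Perm (Fin (Fintype.card V))) (φ : V ≃ Fin (Fintype.card V)),
      ∀ u v : V, T.Adj u v ↔ (permGraph π).Adj (φ u) (φ v) := by
  obtain ⟨φ, hφ⟩ := Fintype.exists_equivFin_lt_iff_lt hx
  obtain ⟨σ, hσ⟩ := Fintype.exists_equivFin_lt_iff_lt hy
  refine ⟨σ.symm.trans φ, φ, fun u v => ?_⟩
  simp [hT, crossingGraph, permGraph, hφ, hσ]

end CrossingGraph

/-- The spine is `{v | P v}`, where `s v` is the position of `v`; a vertex `v` outside the spine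
is a leaf attached to the spine vertices at position `s v`. -/
def caterpillarGraph (P : V → Prop) (s : V → ℕ) : SimpleGraph V :=
  fromRel fun u v => P u ∧ (P v ∧ s u + 1 = s v ∨ ¬ P v ∧ s u = s v)

theorem caterpillarGraph_eq_crossingGraph [Countable V] (P : V → Prop) (s : V → ℕ) :
    ∃ x y : V → ℕ ×ₗ ℕ, Injective x ∧ Injective y ∧
      caterpillarGraph P s = crossingGraph x y := by
  classical
  obtain ⟨r, hr⟩ := Countable.exists_injective_nat V
  let top : V → ℕ := fun v => if P v then 4 * s v + 6 * (s v % 2) else 4 * s v + 3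
  let bot : V → ℕ := fun v => if P v then 4 * s v + 6 - 6 * (s v % 2) else 4 * s v + 3
  refine ⟨fun v => toLex (top v, r v), fun v => toLex (bot v, r v),
    fun u v h => hr (congrArg (fun p => (ofLex p).2) h),
    fun u v h => hr (congrArg (fun p => (ofLex p).2) h), ?_⟩
  ext u v
  have hne : u ≠ v ↔ r u ≠ r v := hr.ne_iff.symm
  simp only [caterpillarGraph, crossingGraph, fromRel_adj, Prod.Lex.toLex_lt_toLex, hne, top, bot]
  by_cases hu : P u <;> by_cases hv : P v <;> simp [hu, hv] <;> omega

theorem eq_caterpillarGraph {G : SimpleGraph V} {P : V → Prop} {s : V → ℕ}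
    (spine_adj : ∀ u v, P u → P v → (G.Adj u v ↔ s u + 1 = s v ∨ s v + 1 = s u))
    (spine_inj : ∀ u v, P u → P v → s u = s v → u = v)
    (leaf_adj : ∀ v, ¬ P v → ∃ w, P w ∧ s w = s v ∧ ∀ u, G.Adj v u ↔ u = w) :
    G = caterpillarGraph P s := by
  have spine_leaf : ∀ u v, P u → ¬ P v → (G.Adj u v ↔ s u = s v) := by
    intro u v hu hv
    obtain ⟨w, hw, hsw, hvw⟩ := leaf_adj v hv
    rw [G.adj_comm, hvw]
    exact ⟨fun h => h ▸ hsw, fun h => spine_inj u w hu hw (h.trans hsw.symm)⟩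
  ext u v
  simp only [caterpillarGraph, fromRel_adj]
  by_cases hu : P u <;> by_cases hv : P v
  · rw [spine_adj u v hu hv]
    exact ⟨fun h => ⟨fun huv => by subst huv; omega, by tauto⟩, by tauto⟩
  · rw [spine_leaf u v hu hv]
    exact ⟨fun h => ⟨fun huv => hv (huv ▸ hu), by tauto⟩, by tauto⟩
  · rw [G.adj_comm, spine_leaf v u hv hu]
    exact ⟨fun h => ⟨fun huv => hu (huv ▸ hv), by tauto⟩, by tauto⟩
  · obtain ⟨w, hw, -, huw⟩ := leaf_adj u hu
    rw [huw]
    exact ⟨fun h => absurd (h ▸ hw) hv, by tauto⟩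

namespace SimpleGraph.Connected

variable [Fintype V] {G : SimpleGraph V}

theorem eq_top_of_card_le_two (hG : G.Connected) (hV : Fintype.card V ≤ 2) : G = ⊤ := by
  classical
  ext u v
  rw [top_adj]
  refine ⟨Adj.ne, fun huv => ?_⟩
  have : Nontrivial V := ⟨u, v, huv⟩
  obtain ⟨w, huw⟩ :=
    (G.degree_pos_iff_exists_adj u).mp (hG.preconnected.degree_pos_of_nontrivial u)
  by_contra h
  have hwv : w ≠ v := fun hwv => h (hwv ▸ huw)
  have := Finset.card_le_univ {u, v, w}
  rw [Finset.card_insert_of_notMem (by simp [huv, huw.ne]),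
    Finset.card_insert_of_notMem (by simp [hwv.symm]), Finset.card_singleton] at this
  omega

theorem not_adj_of_degree_eq_one [DecidableRel G.Adj] (hG : G.Connected)
    (hV : 2 < Fintype.card V) {u v : V} (hu : G.degree u = 1) (hv : G.degree v = 1) :
    ¬ G.Adj u v := by
  intro huv
  have : Nontrivial ({v}ᶜ : Set V) := by
    classical
    rw [← Fintype.one_lt_card_iff_nontrivial, Fintype.card_compl_set, Set.card_singleton]
    omega
  obtain ⟨w, -, hwu⟩ := degree_eq_one_iff_existsUnique_adj.mp hu
  -- `u` would be isolated in the connected graph obtained by deleting the leaf `v`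
  apply (hG.induce_compl_singleton_of_degree_eq_one hv).preconnected.not_isIsolated ⟨u, huv.ne⟩
  rintro ⟨w', hw'⟩ h
  exact hw' (hwu w' h ▸ (hwu v huv).symm)

theorem exists_adj_iff_eq_of_degree_lt_two [DecidableRel G.Adj] (hG : G.Connected)
    (hV : 2 < Fintype.card V) {v : V} (hv : G.degree v < 2) :
    ∃ w, 2 ≤ G.degree w ∧ ∀ u, G.Adj v u ↔ u = w := by
  have : Nontrivial V := Fintype.one_lt_card_iff_nontrivial.mp (by omega)
  have hdeg : G.degree v = 1 := by
    have := hG.preconnected.degree_pos_of_nontrivial v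
    omega
  obtain ⟨w, hvw, huniq⟩ := degree_eq_one_iff_existsUnique_adj.mp hdeg
  refine ⟨w, ?_, fun u => ⟨huniq u, fun h => h ▸ hvw⟩⟩
  by_contra hw
  have hdegw : G.degree w = 1 := by
    have := hvw.degree_pos_right
    omega
  exact hG.not_adj_of_degree_eq_one hV hdeg hdegw hvw

end SimpleGraph.Connected

theorem caterpillarGraph_eq_top_of_card_le_two [Fintype V] (hV : Fintype.card V ≤ 2) :
    caterpillarGraph (fun v => (Fintype.equivFin V v).val = 0) 0 = ⊤ := by
  ext u v
  have hne : u ≠ v ↔ (Fintype.equivFin V u).val ≠ (Fintype.equivFin V v).val := by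
    simp [Fin.val_eq_val]
  have hu := (Fintype.equivFin V u).isLt
  have hv := (Fintype.equivFin V v).isLt
  simp only [caterpillarGraph, fromRel_adj, Pi.zero_apply, and_true, top_adj, hne]
  omega

theorem IsCaterpillar.exists_eq_caterpillarGraph [Fintype V] {T : SimpleGraph V}
    [DecidableRel T.Adj] (hT : IsCaterpillar T) :
    ∃ (P : V → Prop) (s : V → ℕ), T = caterpillarGraph P s := by
  obtain ⟨htree, k, f, hf⟩ := hT
  rcases le_or_gt (Fintype.card V) 2 with hV | hV
  · exact ⟨_, _, (htree.connected.eq_top_of_card_le_two hV).trans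
      (caterpillarGraph_eq_top_of_card_le_two hV).symm⟩
  let P : V → Prop := fun v => 2 ≤ T.degree v
  choose nbr hnbrP hnbr using fun v (hv : ¬ P v) =>
    htree.connected.exists_adj_iff_eq_of_degree_lt_two hV (not_le.mp hv)
  let pos : {v // P v} → ℕ := fun v => (f.symm v).val
  refine ⟨P, fun v => if h : P v then pos ⟨v, h⟩ else pos ⟨nbr v h, hnbrP v h⟩,
    eq_caterpillarGraph ?_ ?_ ?_⟩
  · intro u v hu hv
    simp only [dif_pos hu, dif_pos hv]
    simpa using hf (f.symm ⟨u, hu⟩) (f.symm ⟨v, hv⟩)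
  · intro u v hu hv h
    simp only [dif_pos hu, dif_pos hv] at h
    exact congrArg Subtype.val (f.symm.injective (Fin.ext h))
  · intro v hv
    exact ⟨nbr v hv, hnbrP v hv, by rw [dif_pos (hnbrP v hv), dif_neg hv], hnbr v hv⟩

end Caterpillar

theorem stmt_18_general {V : Type*} [Fintype V]
    (T : SimpleGraph V) [DecidableRel T.Adj] (hT : IsCaterpillar T) :
    ∃ (π : Equiv.Perm (Fin (Fintype.card V))) (φ : V ≃ Fin (Fintype.card V)),
      ∀ u v : V, T.Adj u v ↔ (permGraph π).Adj (φ u) (φ v) := by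
  obtain ⟨P, s, hPs⟩ := hT.exists_eq_caterpillarGraph
  obtain ⟨x, y, hx, hy, hxy⟩ := caterpillarGraph_eq_crossingGraph P s
  exact exists_iso_permGraph_of_eq_crossingGraph hx hy (hPs.trans hxy)

theorem stmt_18 {V : Type*} [Fintype V] [DecidableEq V]
    (T : SimpleGraph V) [DecidableRel T.Adj] (hT : IsCaterpillar T) :
    ∃ (π : Equiv.Perm (Fin (Fintype.card V))) (φ : V ≃ Fin (Fintype.card V)),
      ∀ u v : V, T.Adj u v ↔ (permGraph π).Adj (φ u) (φ v) :=
  stmt_18_general T hT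
end
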